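/- Let q ≥ 2 be an integer, let G be a partially q-colored graph with a free vertex v, and let w ∈ [0,1] be such that Z_G(w) > 0, Z_{G^{+1}}(w) > 0 and Z_{G^{+q}}(w) > 0. Let x ∈ ℂ^{q−1} and define x̂ ∈ ℂ^{q−1} by x̂_1 = −x_1 and x̂_j = x_j − x_1 for j = 2,…,q−1. Let ⟨P_{G,v}(w), x⟩ := Σ_{j=1}^{q−1} P_{G,v;j}(w)·x_j. Then: if Z^1_{G,v}(w) ≤ Z^q_{G,v}(w), one has |⟨P_{G,v}(w), x⟩| ≤ (1−w)·P_{G^{+1},w}[Φ(v)=q]·‖x‖_∞; and if Z^1_{G,v}(w) > Z^q_{G,v}(w), one has |⟨P_{G,v}(w), x⟩| ≤ (1−w)·P_{G^{+q},w}[Φ(v)=1]·‖x̂‖_∞. -/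

import Mathlib

attribute [local instance 10] Classical.propDecidable

noncomputable section

/-- A partially `q`-colored graph: a finite simple graph together with a set `S` of
pinned vertices and a pinning `pin` (only its values on `S` are relevant). -/
structure PCG (q : ℕ) where
  V : Type
  fin : Fintype V
  G : SimpleGraph V
  S : Finset V
  pin : V → Fin q

namespace PCG

variable {q : ℕ}

instance (H : PCG q) : Fintype H.V := H.fin

/-- colorings agreeing with the pinning on the pinned set -/
def admissible (H : PCG q) (ψ : H.V → Fin q) : Prop :=
  ∀ u ∈ H.S, ψ u = H.pin u

/-- the number of monochromatic edges of a coloring -/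
def mono (H : PCG q) (ψ : H.V → Fin q) : ℕ :=
  ((Finset.univ : Finset (Sym2 H.V)).filter
    (fun e => e ∈ H.G.edgeSet ∧ (e.map ψ).IsDiag)).card

/-- the (complex) Potts partition function of a partially colored graph -/
def Z (H : PCG q) (w : ℂ) : ℂ :=
  ∑ ψ ∈ Finset.univ.filter (fun ψ : H.V → Fin q => H.admissible ψ), w ^ H.mono ψ

/-- the partition function restricted to colorings giving `v` the color `j` -/
def Zc (H : PCG q) (v : H.V) (j : Fin q) (w : ℂ) : ℂ :=
  ∑ ψ ∈ Finset.univ.filter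
      (fun ψ : H.V → Fin q => H.admissible ψ ∧ ψ v = j), w ^ H.mono ψ

/-- the real Potts partition function -/
def Zr (H : PCG q) (w : ℝ) : ℝ :=
  ∑ ψ ∈ Finset.univ.filter (fun ψ : H.V → Fin q => H.admissible ψ), w ^ H.mono ψ

/-- the real partition function restricted to colorings giving `v` the color `j` -/
def Zcr (H : PCG q) (v : H.V) (j : Fin q) (w : ℝ) : ℝ :=
  ∑ ψ ∈ Finset.univ.filter
      (fun ψ : H.V → Fin q => H.admissible ψ ∧ ψ v = j), w ^ H.mono ψ

/-- the marginal probability that `v` receives the color `j` -/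
def Pr (H : PCG q) (v : H.V) (j : Fin q) (w : ℝ) : ℝ :=
  H.Zcr v j w / H.Zr w

/-- the neighborhood of a vertex -/
def nbhd (H : PCG q) (v : H.V) : Finset H.V :=
  Finset.univ.filter (fun u => H.G.Adj v u)

/-- the degree of a vertex -/
def deg (H : PCG q) (v : H.V) : ℕ := (H.nbhd v).card

/-- the free degree of a vertex: its number of free neighbors -/
def freeDeg (H : PCG q) (v : H.V) : ℕ :=
  ((H.nbhd v).filter (fun u => u ∉ H.S)).card

/-- the number of pinned neighbors of `v` colored `j` -/
def cvec (H : PCG q) (v : H.V) (j : Fin q) : ℕ :=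
  ((H.nbhd v).filter (fun u => u ∈ H.S ∧ H.pin u = j)).card

/-- the color `j` is blocked at `v`: some pinned neighbor of `v` is colored `j` -/
def blockedAt (H : PCG q) (v : H.V) (j : Fin q) : Prop :=
  ∃ u ∈ H.nbhd v, u ∈ H.S ∧ H.pin u = j

/-- the set of colors that are free at `v` -/
def freeColors (H : PCG q) (v : H.V) : Finset (Fin q) :=
  Finset.univ.filter (fun j => ¬ H.blockedAt v j)

/-- the graph has maximum degree at most `Δ` -/
def maxDegLE (H : PCG q) (Δ : ℕ) : Prop := ∀ u, H.deg u ≤ Δ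

/-- the class 𝒢•: `H` is connected, has max degree at most `Δ`, its pinned vertices
are leaves and form an independent set, and `v` is a free vertex -/
def GoodPair (Δ : ℕ) (H : PCG q) (v : H.V) : Prop :=
  H.G.Connected ∧ H.maxDegLE Δ ∧ (∀ u ∈ H.S, H.deg u = 1) ∧
    (∀ u ∈ H.S, ∀ u' ∈ H.S, ¬ H.G.Adj u u') ∧ v ∉ H.S

/-- `Ḡ`: the graph obtained by deleting all pinned neighbors of `v` -/
def bar (H : PCG q) (v : H.V) : PCG q where
  V := ↥{u : H.V | ¬(u ∈ H.S ∧ H.G.Adj v u)}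
  fin := inferInstance
  G := H.G.induce {u : H.V | ¬(u ∈ H.S ∧ H.G.Adj v u)}
  S := Finset.univ.filter (fun u => u.1 ∈ H.S)
  pin := fun u => H.pin u.1

/-- the vertex `v` viewed as a vertex of `Ḡ` -/
def barVert (H : PCG q) (v : H.V) : (H.bar v).V :=
  ⟨v, fun h => H.G.irrefl h.2⟩

/-- `G − v`: the graph obtained by deleting the vertex `v` -/
def deleteVert (H : PCG q) (v : H.V) : PCG q where
  V := ↥{u : H.V | u ≠ v}
  fin := inferInstance
  G := H.G.induce {u : H.V | u ≠ v}
  S := Finset.univ.filter (fun u => u.1 ∈ H.S)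
  pin := fun u => H.pin u.1

/-- `G^{+ℓ}`: attach a new pinned leaf of color `ℓ` to the vertex `v` -/
def addLeaf (H : PCG q) (v : H.V) (ℓ : Fin q) : PCG q where
  V := Option H.V
  fin := inferInstance
  G := SimpleGraph.fromRel (fun a b =>
    (∃ u u' : H.V, a = some u ∧ b = some u' ∧ H.G.Adj u u') ∨ (a = none ∧ b = some v))
  S := insert none (H.S.image some)
  pin := fun a => a.elim ℓ H.pin

/-- the complex log-ratio `R_{G,v;i,j}` -/
def logRatio (H : PCG q) (v : H.V) (i j : Fin q) (w : ℂ) : ℂ :=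
  Complex.log (H.Zc v i w / H.Zc v j w)

/-- the vector `P_{G,v}(w) ∈ ℝ^{q−1}` of marginal differences -/
def Pvec (H : PCG q) (v : H.V) (w : ℝ) (j : Fin (q - 1)) : ℝ :=
  (H.addLeaf v ⟨0, by have := j.2; omega⟩).Pr (some v) (Fin.castLE (Nat.sub_le q 1) j) w -
  (H.addLeaf v ⟨q - 1, by have := j.2; omega⟩).Pr (some v) (Fin.castLE (Nat.sub_le q 1) j) w

/-- the graph `Ĝ_i` of the telescoping procedure: delete `v` from `G`, attach to the
`j`-th neighbor of `v` (for `j ≠ i`) a pinned leaf colored `ℓ₂` if `j < i` and `ℓ₁`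
if `j > i`, and attach a free leaf (the vertex `Sum.inr i`) to the `i`-th neighbor. -/
def telescope (H : PCG q) (v : H.V) {d : ℕ} (nbrs : Fin d → H.V)
    (ℓ₁ ℓ₂ : Fin q) (i : Fin d) : PCG q where
  V := ↥{u : H.V | u ≠ v} ⊕ Fin d
  fin := inferInstance
  G := SimpleGraph.fromRel (fun a b =>
    (∃ u u' : ↥{u : H.V | u ≠ v}, a = Sum.inl u ∧ b = Sum.inl u' ∧ H.G.Adj u.1 u'.1) ∨
    (∃ (u : ↥{u : H.V | u ≠ v}) (j : Fin d), a = Sum.inl u ∧ b = Sum.inr j ∧ u.1 = nbrs j))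
  S := (Finset.univ.filter (fun u : ↥{u : H.V | u ≠ v} => u.1 ∈ H.S)).image Sum.inl ∪
       (Finset.univ.filter (fun j : Fin d => j ≠ i)).image Sum.inr
  pin := Sum.elim (fun u => H.pin u.1) (fun j => if (j : ℕ) < (i : ℕ) then ℓ₂ else ℓ₁)

end PCG

/-- extend a vector indexed by `Fin (q-1)` to `Fin q` by a zero last coordinate -/
def extendLast (q : ℕ) (x : Fin (q - 1) → ℂ) : Fin q → ℂ :=
  fun j => if h : (j : ℕ) < q - 1 then x ⟨j, h⟩ else 0

/-- the polynomial `P_c(w,x) = w^{c₁+1}e^{x₁} + Σ_{j=2}^{q−1} w^{c_j}e^{x_j} + w^{c_q}` -/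
def Ppoly (q : ℕ) (c : Fin q → ℕ) (w : ℂ) (x : Fin (q - 1) → ℂ) : ℂ :=
  ∑ j : Fin q, w ^ (c j + if (j : ℕ) = 0 then 1 else 0) * Complex.exp (extendLast q x j)

/-- the polynomial `Q_c(w,x) = w^{c₁}e^{x₁} + Σ_{j=2}^{q−1} w^{c_j}e^{x_j} + w^{c_q+1}` -/
def Qpoly (q : ℕ) (c : Fin q → ℕ) (w : ℂ) (x : Fin (q - 1) → ℂ) : ℂ :=
  ∑ j : Fin q, w ^ (c j + if (j : ℕ) = q - 1 then 1 else 0) * Complex.exp (extendLast q x j)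

/-- the map `F_{w,c}(x) = Log (P_c(w,x)/Q_c(w,x))` -/
def Fmap (q : ℕ) (c : Fin q → ℕ) (w : ℂ) (x : Fin (q - 1) → ℂ) : ℂ :=
  Complex.log (Ppoly q c w x / Qpoly q c w x)

/-- real version of `extendLast` -/
def extendLastR (q : ℕ) (x : Fin (q - 1) → ℝ) : Fin q → ℝ :=
  fun j => if h : (j : ℕ) < q - 1 then x ⟨j, h⟩ else 0

/-- real version of `Ppoly` -/
def PpolyR (q : ℕ) (c : Fin q → ℕ) (w : ℝ) (x : Fin (q - 1) → ℝ) : ℝ :=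
  ∑ j : Fin q, w ^ (c j + if (j : ℕ) = 0 then 1 else 0) * Real.exp (extendLastR q x j)

/-- real version of `Qpoly` -/
def QpolyR (q : ℕ) (c : Fin q → ℕ) (w : ℝ) (x : Fin (q - 1) → ℝ) : ℝ :=
  ∑ j : Fin q, w ^ (c j + if (j : ℕ) = q - 1 then 1 else 0) * Real.exp (extendLastR q x j)

/-- real version of `Fmap`, i.e. `F_{w,c}` viewed as a real function on `ℝ^{q−1}` -/
def FmapR (q : ℕ) (c : Fin q → ℕ) (w : ℝ) (x : Fin (q - 1) → ℝ) : ℝ :=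
  Real.log (PpolyR q c w x / QpolyR q c w x)


/-!
Write `z j = Z^j_{G,v}(w)`. The pinned leaf of color `ℓ` multiplies the weight of color `ℓ`
at `v` by `w`, so `P_{G^{+ℓ},w}[Φ(v) = j] = (w if j = ℓ else 1) z_j / (Σ z - (1 - w) z_ℓ)`.
If `z_1 ≤ z_q`, the denominator for `ℓ = q` is the smaller one, so the marginal differences
`d_j = P_{G^{+1}}[Φ(v) = j] - P_{G^{+q}}[Φ(v) = j]`, taken over all `q` colors, are `≤ 0` except
for `j = q`, and they sum to `0`. Hence `|Σ_j d_j x_j| ≤ d_q ‖x‖_∞` (with `x_q = 0`), and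
`d_q ≤ (1 - w) P_{G^{+1}}[Φ(v) = q]`. If `z_1 > z_q`, exchange the roles of the colors `1` and `q`
and shift `x` by `x_1`, which turns it into `x̂`.
-/

lemma card_monochromatic_add_leaf {α β : Type*} [Fintype α] [DecidableEq β]
    (G : SimpleGraph α) (G' : SimpleGraph (Option α)) (v : α)
    (hsome : ∀ u u', G'.Adj (some u) (some u') ↔ G.Adj u u')
    (hnone : ∀ a, G'.Adj none a ↔ a = some v) (ψ : α → β) (c : β) :
    (Finset.univ.filter fun e : Sym2 (Option α) =>
        e ∈ G'.edgeSet ∧ (e.map fun o => o.elim c ψ).IsDiag).card =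
      (Finset.univ.filter fun e : Sym2 α => e ∈ G.edgeSet ∧ (e.map ψ).IsDiag).card +
        if ψ v = c then 1 else 0 := by
  have map_some_inj := Sym2.map.injective (Option.some_injective α)
  have hsplit : (Finset.univ.filter fun e : Sym2 (Option α) =>
        e ∈ G'.edgeSet ∧ (e.map fun o => o.elim c ψ).IsDiag) =
      (Finset.univ.filter fun e : Sym2 α => e ∈ G.edgeSet ∧ (e.map ψ).IsDiag).map
          ⟨Sym2.map some, map_some_inj⟩ ∪
        ({s(none, some v)} : Finset _).filter fun _ => ψ v = c := by
    ext e
    induction e using Sym2.ind with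
    | _ a b =>
      by_cases hc : ψ v = c <;> cases a <;> cases b <;>
        simp [hsome, hnone, G'.adj_comm _ none, Sym2.exists, hc] <;> grind [SimpleGraph.Adj.symm]
  rw [hsplit, Finset.card_union_of_disjoint, Finset.card_map, Finset.filter_singleton]
  · split_ifs <;> rfl
  · simp only [Finset.disjoint_left, Finset.mem_map, Finset.mem_filter, Finset.mem_singleton]
    rintro _ ⟨e, -, rfl⟩ ⟨he, -⟩
    induction e using Sym2.ind
    simp at he

lemma norm_sum_mul_le_of_sum_eq_zero {ι : Type*} [Fintype ι] [DecidableEq ι] {d : ι → ℝ}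
    {y : ι → ℂ} {m : ι} {K : ℝ} (hd : ∑ i, d i = 0) (hneg : ∀ j ≠ m, d j ≤ 0)
    (hK : ∀ j, ‖y j - y m‖ ≤ K) :
    ‖∑ j, (d j : ℂ) * y j‖ ≤ d m * K := by
  have hshift : ∑ j, (d j : ℂ) * y j = ∑ j, (d j : ℂ) * (y j - y m) := by
    simp only [mul_sub, Finset.sum_sub_distrib, ← Finset.sum_mul, ← Complex.ofReal_sum, hd,
      Complex.ofReal_zero, zero_mul, sub_zero]
  have hrest : ∑ j ∈ Finset.univ.erase m, d j = -d m := by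
    rw [eq_neg_iff_add_eq_zero, add_comm, Finset.add_sum_erase _ _ (Finset.mem_univ m), hd]
  calc ‖∑ j, (d j : ℂ) * y j‖ ≤ ∑ j, ‖(d j : ℂ) * (y j - y m)‖ := hshift ▸ norm_sum_le _ _
    _ = ∑ j ∈ Finset.univ.erase m, ‖(d j : ℂ) * (y j - y m)‖ :=
        (Finset.sum_erase _ (by simp)).symm
    _ ≤ ∑ j ∈ Finset.univ.erase m, -d j * K := by
        refine Finset.sum_le_sum fun j hj => ?_
        rw [norm_mul, Complex.norm_real, Real.norm_of_nonpos (hneg j (Finset.ne_of_mem_erase hj))]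
        exact mul_le_mul_of_nonneg_left (hK j) (neg_nonneg.2 (hneg j (Finset.ne_of_mem_erase hj)))
    _ = d m * K := by rw [← Finset.sum_mul, Finset.sum_neg_distrib, hrest, neg_neg]

lemma norm_sum_real_sub_mul_comm {ι : Type*} [Fintype ι] (a b : ι → ℝ) (y : ι → ℂ) :
    ‖∑ j, ((a j - b j : ℝ) : ℂ) * y j‖ = ‖∑ j, ((b j - a j : ℝ) : ℂ) * y j‖ := by
  rw [← norm_neg, ← Finset.sum_neg_distrib]
  congr 1
  refine Finset.sum_congr rfl fun j _ => ?_
  push_cast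
  ring

section LeafMarginal

variable {ι : Type*} [Fintype ι] [DecidableEq ι]

/-- `Z_{G^{+ℓ}}(w)` when `z j = Z^j_{G,v}(w)`; `leafMarginal z w ℓ j` is then
`P_{G^{+ℓ},w}[Φ(v) = j]`. -/
def leafPartition (z : ι → ℝ) (w : ℝ) (ℓ : ι) : ℝ :=
  ∑ i, (if i = ℓ then w else 1) * z i

def leafMarginal (z : ι → ℝ) (w : ℝ) (ℓ j : ι) : ℝ :=
  (if j = ℓ then w else 1) * z j / leafPartition z w ℓ

lemma leafPartition_eq (z : ι → ℝ) (w : ℝ) (ℓ : ι) :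
    leafPartition z w ℓ = ∑ i, z i - (1 - w) * z ℓ := by
  have hterm : ∀ i, (if i = ℓ then w else 1) * z i = z i - if i = ℓ then (1 - w) * z ℓ else 0 := by
    intro i
    split_ifs with h
    · subst h; ring
    · ring
  simp only [leafPartition, hterm, Finset.sum_sub_distrib, Finset.sum_ite_eq', Finset.mem_univ,
    if_true]

variable {z : ι → ℝ} {w : ℝ} {ℓ m : ι}

lemma leafPartition_le_leafPartition (hw : w ≤ 1) (hzm : z ℓ ≤ z m) :
    leafPartition z w m ≤ leafPartition z w ℓ := by
  rw [leafPartition_eq, leafPartition_eq]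
  nlinarith

lemma sum_leafMarginal (h : leafPartition z w ℓ ≠ 0) : ∑ j, leafMarginal z w ℓ j = 1 := by
  rw [← div_self h]
  exact (Finset.sum_div _ _ _).symm

lemma leafMarginal_le_leafMarginal (hz : ∀ i, 0 ≤ z i) (hw : w ≤ 1) (hzm : z ℓ ≤ z m)
    (hm : 0 < leafPartition z w m) {j : ι} (hj : j ≠ m) :
    leafMarginal z w ℓ j ≤ leafMarginal z w m j := by
  have hD := leafPartition_le_leafPartition hw hzm
  unfold leafMarginal
  rw [if_neg hj, one_mul]
  calc (if j = ℓ then w else 1) * z j / leafPartition z w ℓ ≤ z j / leafPartition z w ℓ := by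
        gcongr
        · exact hm.le.trans hD
        · exact mul_le_of_le_one_left (hz j) (by split_ifs <;> linarith)
    _ ≤ z j / leafPartition z w m := div_le_div_of_nonneg_left (hz j) hm hD

lemma leafMarginal_sub_le (hz : ∀ i, 0 ≤ z i) (hw : w ∈ Set.Icc (0 : ℝ) 1) (hℓm : ℓ ≠ m)
    (hzm : z ℓ ≤ z m) (hm : 0 < leafPartition z w m) :
    leafMarginal z w ℓ m - leafMarginal z w m m ≤ (1 - w) * leafMarginal z w ℓ m := by
  have hD := leafPartition_le_leafPartition hw.2 hzm
  unfold leafMarginal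
  rw [if_neg hℓm.symm, if_pos rfl, one_mul]
  have : w * z m / leafPartition z w ℓ ≤ w * z m / leafPartition z w m :=
    div_le_div_of_nonneg_left (mul_nonneg hw.1 (hz m)) hm hD
  linarith [show (1 - w) * (z m / leafPartition z w ℓ) =
    z m / leafPartition z w ℓ - w * z m / leafPartition z w ℓ by ring]

lemma norm_sum_leafMarginal_sub_mul_le {y : ι → ℂ} {K : ℝ} (hz : ∀ i, 0 ≤ z i)
    (hw : w ∈ Set.Icc (0 : ℝ) 1) (hℓm : ℓ ≠ m) (hzm : z ℓ ≤ z m) (hm : 0 < leafPartition z w m)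
    (hK : ∀ j, ‖y j - y m‖ ≤ K) :
    ‖∑ j, ((leafMarginal z w ℓ j - leafMarginal z w m j : ℝ) : ℂ) * y j‖ ≤
      (1 - w) * leafMarginal z w ℓ m * K := by
  have hℓ : 0 < leafPartition z w ℓ := hm.trans_le (leafPartition_le_leafPartition hw.2 hzm)
  have hK0 : 0 ≤ K := by simpa using hK m
  calc _ ≤ (leafMarginal z w ℓ m - leafMarginal z w m m) * K := by
        refine norm_sum_mul_le_of_sum_eq_zero ?_ ?_ hK
        · rw [Finset.sum_sub_distrib, sum_leafMarginal hℓ.ne', sum_leafMarginal hm.ne', sub_self]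
        · exact fun j hj => sub_nonpos.2 (leafMarginal_le_leafMarginal hz hw.2 hzm hm hj)
    _ ≤ _ := mul_le_mul_of_nonneg_right (leafMarginal_sub_le hz hw hℓm hzm hm) hK0

end LeafMarginal

lemma sum_mul_extendLast {q : ℕ} (f : Fin q → ℂ) (x : Fin (q - 1) → ℂ) :
    ∑ k, f k * extendLast q x k = ∑ j : Fin (q - 1), f (Fin.castLE (Nat.sub_le q 1) j) * x j := by
  rcases q with _ | n
  · simp
  · simp only [extendLast, Fin.sum_univ_castSucc, Fin.val_castSucc, Fin.val_last,
      Nat.add_one_sub_one, Fin.is_lt, lt_self_iff_false, dif_pos, dif_neg, not_false_eq_true,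
      mul_zero, add_zero]
    rfl

lemma norm_extendLast_le {q : ℕ} (x : Fin (q - 1) → ℂ) (k : Fin q) :
    ‖extendLast q x k‖ ≤ ‖x‖ := by
  unfold extendLast
  split_ifs
  · exact norm_le_pi_norm x _
  · simp

lemma norm_extendLast_sub_extendLast_zero_le {q : ℕ} (hq : 1 < q) {x xh : Fin (q - 1) → ℂ}
    (hxh1 : xh ⟨0, by omega⟩ = - x ⟨0, by omega⟩)
    (hxh : ∀ j : Fin (q - 1), (j : ℕ) ≠ 0 → xh j = x j - x ⟨0, by omega⟩) (k : Fin q) :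
    ‖extendLast q x k - extendLast q x ⟨0, by omega⟩‖ ≤ ‖xh‖ := by
  have hx0 : extendLast q x ⟨0, by omega⟩ = x ⟨0, by omega⟩ := dif_pos (by dsimp only; omega)
  rw [hx0]
  unfold extendLast
  split_ifs with hk
  · by_cases hk0 : (k : ℕ) = 0
    · simp [hk0]
    · rw [← hxh ⟨k, hk⟩ hk0]
      exact norm_le_pi_norm xh _
  · rw [zero_sub, ← hxh1]
    exact norm_le_pi_norm xh _

namespace PCG

variable {q : ℕ}

lemma Zr_eq_sum_Zcr (H : PCG q) (v : H.V) (w : ℝ) :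
    H.Zr w = ∑ j : Fin q, H.Zcr v j w := by
  unfold Zr Zcr
  rw [← Finset.sum_fiberwise _ (fun ψ => ψ v)]
  simp only [Finset.filter_filter]

lemma mono_addLeaf (H : PCG q) (v : H.V) (ℓ : Fin q) (ψ : H.V → Fin q) :
    (H.addLeaf v ℓ).mono (fun o => o.elim ℓ ψ) = H.mono ψ + if ψ v = ℓ then 1 else 0 := by
  refine card_monochromatic_add_leaf H.G (H.addLeaf v ℓ).G v (fun u u' => ?_) (fun a => ?_) ψ ℓ
  · simpa [addLeaf, H.G.adj_comm u'] using @SimpleGraph.Adj.ne _ H.G u u'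
  · simpa [addLeaf] using fun h : a = some v => (h ▸ Option.some_ne_none v).symm

lemma admissible_addLeaf_iff (H : PCG q) (v : H.V) (ℓ : Fin q) (ψ : Option H.V → Fin q) :
    (H.addLeaf v ℓ).admissible ψ ↔ ψ none = ℓ ∧ H.admissible (fun u => ψ (some u)) := by
  change (∀ u ∈ (insert none (H.S.image some) : Finset (Option H.V)), ψ u = u.elim ℓ H.pin) ↔ _
  rw [Finset.forall_mem_insert, Finset.forall_mem_image]
  rfl

lemma Zcr_addLeaf (H : PCG q) (v : H.V) (ℓ j : Fin q) (w : ℝ) :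
    (H.addLeaf v ℓ).Zcr (some v) j w = (if j = ℓ then w else 1) * H.Zcr v j w := by
  unfold Zcr
  rw [Finset.mul_sum]
  symm
  refine Finset.sum_nbij' (fun ψ o => o.elim ℓ ψ) (fun ψ u => ψ (some u)) ?_ ?_ ?_ ?_ ?_
  · intro ψ hψ
    obtain ⟨hadm, hv⟩ := (Finset.mem_filter.1 hψ).2
    exact Finset.mem_filter.2 ⟨Finset.mem_univ _, (admissible_addLeaf_iff H v ℓ _).2 ⟨rfl, hadm⟩, hv⟩
  · intro ψ hψ
    obtain ⟨hadm, hv⟩ := (Finset.mem_filter.1 hψ).2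
    exact Finset.mem_filter.2 ⟨Finset.mem_univ _, ((admissible_addLeaf_iff H v ℓ _).1 hadm).2, hv⟩
  · intro ψ _
    rfl
  · intro ψ hψ
    funext o
    cases o with
    | none => exact ((admissible_addLeaf_iff H v ℓ _).1 (Finset.mem_filter.1 hψ).2.1).1.symm
    | some u => rfl
  · intro ψ hψ
    obtain ⟨-, hv⟩ := (Finset.mem_filter.1 hψ).2
    rw [mono_addLeaf, pow_add, hv]
    split_ifs <;> simp [mul_comm]

lemma Pr_addLeaf (H : PCG q) (v : H.V) (ℓ k : Fin q) (w : ℝ) :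
    (H.addLeaf v ℓ).Pr (some v) k w = leafMarginal (H.Zcr v · w) w ℓ k := by
  simp only [Pr, leafMarginal, leafPartition, Zr_eq_sum_Zcr (H.addLeaf v ℓ) (some v), Zcr_addLeaf]

lemma Zr_addLeaf (H : PCG q) (v : H.V) (ℓ : Fin q) (w : ℝ) :
    (H.addLeaf v ℓ).Zr w = leafPartition (H.Zcr v · w) w ℓ := by
  simp only [leafPartition, Zr_eq_sum_Zcr (H.addLeaf v ℓ) (some v), Zcr_addLeaf]

end PCG

/-- Lemma 4.3: bounding the inner product of `P_{G,v}(w)` with a complex vector. -/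
theorem replace_by_prob (q : ℕ) (hq : 2 ≤ q) (H : PCG q) (v : H.V)
    (w : ℝ) (hw : w ∈ Set.Icc (0 : ℝ) 1)
    (hZ1 : 0 < (H.addLeaf v ⟨0, by omega⟩).Zr w)
    (hZq : 0 < (H.addLeaf v ⟨q - 1, by omega⟩).Zr w)
    (x xh : Fin (q - 1) → ℂ)
    (hxh1 : xh ⟨0, by omega⟩ = - x ⟨0, by omega⟩)
    (hxh : ∀ j : Fin (q - 1), (j : ℕ) ≠ 0 → xh j = x j - x ⟨0, by omega⟩) :
    (H.Zcr v ⟨0, by omega⟩ w ≤ H.Zcr v ⟨q - 1, by omega⟩ w →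
      ‖∑ j : Fin (q - 1), (H.Pvec v w j : ℂ) * x j‖ ≤
        (1 - w) * (H.addLeaf v ⟨0, by omega⟩).Pr (some v) ⟨q - 1, by omega⟩ w * ‖x‖) ∧
    (H.Zcr v ⟨q - 1, by omega⟩ w < H.Zcr v ⟨0, by omega⟩ w →
      ‖∑ j : Fin (q - 1), (H.Pvec v w j : ℂ) * x j‖ ≤
        (1 - w) * (H.addLeaf v ⟨q - 1, by omega⟩).Pr (some v) ⟨0, by omega⟩ w * ‖xh‖) := by
  set z : Fin q → ℝ := (H.Zcr v · w)
  have hz : ∀ j, 0 ≤ z j := fun j => Finset.sum_nonneg fun _ _ => pow_nonneg hw.1 _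
  have hℓ : (⟨0, by omega⟩ : Fin q) ≠ ⟨q - 1, by omega⟩ := Fin.ne_of_val_ne (by dsimp only; omega)
  have hsum : ∑ j : Fin (q - 1), (H.Pvec v w j : ℂ) * x j =
      ∑ k, ((leafMarginal z w ⟨0, by omega⟩ k - leafMarginal z w ⟨q - 1, by omega⟩ k : ℝ) : ℂ) *
        extendLast q x k := by
    simp only [sum_mul_extendLast, PCG.Pvec, PCG.Pr_addLeaf]
    rfl
  simp only [PCG.Zr_addLeaf] at hZ1 hZq
  simp only [hsum, PCG.Pr_addLeaf]
  refine ⟨fun hzq => ?_, fun hz1 => ?_⟩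
  · refine norm_sum_leafMarginal_sub_mul_le hz hw hℓ hzq hZq fun k => ?_
    simpa [extendLast] using norm_extendLast_le x k
  · rw [norm_sum_real_sub_mul_comm]
    exact norm_sum_leafMarginal_sub_mul_le hz hw hℓ.symm hz1.le hZ1
      (norm_extendLast_sub_extendLast_zero_le hq hxh1 hxh)
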